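/- Let G be a finite group, C a union of G-conjugacy classes, and suppose C is a union of Γ_K-conjugacy classes for a field K with ℚ ≤ K ≤ ℚ(ζ_m), m the exponent of G. Then for every irreducible complex character χ of G, the eigenvalue (1/χ(1))·Σ_{x∈C} χ(x) lies in K. -/

import Mathlib

/-!
The eigenvalues of `g` on `V` are powers `ζ ^ i`, so `χ (g ^ t) = P_g (ζ ^ t)` for a polynomial
`P_g` with natural coefficients (the eigenvalue multiplicities). Hence an automorphism `σ` of
`ℚ(ζ)` with `σ ζ = ζ ^ t` maps `χ g` to `χ (g ^ t)`. If `σ` fixes `K`, then `t` is in `Γ_K`, so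
`x ↦ x ^ t` maps `C` injectively into itself and `σ` fixes `∑_{x ∈ C} χ x`; by Galois theory
this sum lies in `K`, and `χ 1` is a natural number.
-/

noncomputable section
open IntermediateField

/-- `t` lies in `Γ_K`. -/
def GammaK (ζ : ℂ) (K : IntermediateField ℚ ℂ) (t : ℕ) : Prop :=
  ∃ σ : ℚ⟮ζ⟯ ≃ₐ[ℚ] ℚ⟮ζ⟯,
    (∀ (x : ℂ) (hx : x ∈ ℚ⟮ζ⟯), x ∈ K → (σ ⟨x, hx⟩ : ℂ) = x) ∧
    (σ ⟨ζ, IntermediateField.mem_adjoin_simple_self ℚ ζ⟩ : ℂ) = ζ ^ t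

/-- `Γ_K`-conjugacy. -/
def GammaConj {G : Type} [Group G] (ζ : ℂ) (K : IntermediateField ℚ ℂ) (g h : G) : Prop :=
  ∃ t : ℕ, GammaK ζ K t ∧ IsConj g (h ^ t)

open Polynomial

theorem Polynomial.map_aeval_nat {A B F : Type*} [Semiring A] [Semiring B] [FunLike F A B]
    [RingHomClass F A B] (f : F) (x : A) (p : ℕ[X]) : f (aeval x p) = aeval (f x) p :=
  (aeval_algHom_apply (f : A →+* B).toNatAlgHom x p).symm

namespace Module.End

variable {K V : Type*} [Field K] [AddCommGroup V] [Module K V]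

theorem pow_apply_of_mem_eigenspace {f : End K V} {μ : K} {v : V} (hv : v ∈ f.eigenspace μ)
    (n : ℕ) : (f ^ n) v = μ ^ n • v := by
  by_cases h0 : v = 0
  · simp [h0]
  · exact HasEigenvector.pow_apply ⟨hv, h0⟩ n

theorem HasEigenvalue.pow_eq_one {f : End K V} {μ : K} (hμ : f.HasEigenvalue μ) {m : ℕ}
    (hf : f ^ m = 1) : μ ^ m = 1 := by
  obtain ⟨v, hv⟩ := hμ.exists_hasEigenvector
  have h := hv.pow_apply m
  rw [hf, one_apply] at h
  exact smul_left_injective K hv.2 (show μ ^ m • v = (1 : K) • v by rw [one_smul, ← h])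

variable [IsAlgClosed K] [FiniteDimensional K V]

theorem exists_trace_pow_eq_sum_of_pow_eq_one (f : End K V) {m : ℕ} (hm : (m : K) ≠ 0)
    (hf : f ^ m = 1) : ∃ (s : Finset K) (d : K → ℕ), (∀ μ ∈ s, μ ^ m = 1) ∧
      ∀ t : ℕ, LinearMap.trace K V (f ^ t) = ∑ μ ∈ s, d μ * μ ^ t := by
  classical
  have hss : f.IsSemisimple := by
    refine isSemisimple_of_squarefree_aeval_eq_zero
      (separable_X_pow_sub_C 1 hm one_ne_zero).squarefree ?_
    simp [hf]
  have hint : DirectSum.IsInternal f.eigenspace :=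
    DirectSum.isInternal_submodule_of_iSupIndep_of_iSup_eq_top f.eigenspaces_iSupIndep
      hss.iSup_eigenspace_eq_top
  have hfin : {μ | f.eigenspace μ ≠ ⊥}.Finite :=
    WellFoundedGT.finite_ne_bot_of_iSupIndep f.eigenspaces_iSupIndep
  refine ⟨hfin.toFinset, fun μ ↦ Module.finrank K (f.eigenspace μ),
    fun μ hμ ↦ HasEigenvalue.pow_eq_one (hfin.mem_toFinset.mp hμ) hf, fun t ↦ ?_⟩
  have hmaps (μ : K) : Set.MapsTo (f ^ t) (f.eigenspace μ) (f.eigenspace μ) :=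
    f.mapsTo_genEigenspace_of_comm ((Commute.refl f).pow_right t) μ 1
  rw [LinearMap.trace_eq_sum_trace_restrict' hint hfin hmaps]
  refine Finset.sum_congr rfl fun μ _ ↦ ?_
  have hres : (f ^ t).restrict (hmaps μ) = μ ^ t • LinearMap.id :=
    LinearMap.ext fun v ↦ Subtype.ext (pow_apply_of_mem_eigenspace v.2 t)
  rw [hres, map_smul, LinearMap.trace_id, smul_eq_mul, mul_comm]

theorem exists_trace_pow_eq_aeval_of_pow_eq_one (f : End K V) {m : ℕ} [NeZero m] {ζ : K}
    (hζ : IsPrimitiveRoot ζ m) (hf : f ^ m = 1) :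
    ∃ P : ℕ[X], ∀ t : ℕ, LinearMap.trace K V (f ^ t) = aeval (ζ ^ t) P := by
  obtain ⟨s, d, hs, htr⟩ := f.exists_trace_pow_eq_sum_of_pow_eq_one hζ.neZero'.out hf
  choose! e he using fun μ hμ ↦ hζ.eq_pow_of_pow_eq_one (hs μ hμ)
  refine ⟨∑ μ ∈ s, C (d μ) * X ^ e μ, fun t ↦ ?_⟩
  rw [htr, map_sum]
  refine Finset.sum_congr rfl fun μ hμ ↦ ?_
  rw [map_mul, aeval_C, eq_natCast, map_pow, aeval_X, ← pow_mul, mul_comm t, pow_mul,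
    (he μ hμ).2]

end Module.End

theorem FDRep.exists_character_pow_eq_aeval {k G : Type*} [Field k] [IsAlgClosed k] [Group G]
    [Finite G] (V : FDRep k G) {ζ : k} (hζ : IsPrimitiveRoot ζ (Monoid.exponent G)) (g : G) :
    ∃ P : ℕ[X], ∀ t : ℕ, V.character (g ^ t) = aeval (ζ ^ t) P := by
  have : NeZero (Monoid.exponent G) := ⟨Monoid.exponent_ne_zero_of_finite⟩
  have hg : V.ρ g ^ Monoid.exponent G = 1 := by
    rw [← map_pow, Monoid.pow_exponent_eq_one, map_one]
  obtain ⟨P, hP⟩ := Module.End.exists_trace_pow_eq_aeval_of_pow_eq_one (V.ρ g) hζ hg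
  exact ⟨P, fun t ↦ by rw [FDRep.character, map_pow, hP]⟩

theorem IsPrimitiveRoot.isGalois_adjoin_simple (K : Type*) {L : Type*} [Field K] [Field L]
    [Algebra K L] {ζ : L} {n : ℕ} [NeZero n] (hζ : IsPrimitiveRoot ζ n) : IsGalois K K⟮ζ⟯ := by
  have : IsCyclotomicExtension {n} K K⟮ζ⟯ := by
    change IsCyclotomicExtension {n} K K⟮ζ⟯.toSubalgebra
    rw [adjoin_simple_toSubalgebra_of_isAlgebraic
      (hζ.isIntegral (NeZero.pos n)).tower_top.isAlgebraic]
    exact hζ.adjoin_isCyclotomicExtension K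
  exact IsCyclotomicExtension.isGalois {n} K K⟮ζ⟯

theorem Monoid.pow_val_injective {G : Type*} [Monoid G] {n : ℕ} [NeZero n]
    (hn : Monoid.exponent G ∣ n) (a : (ZMod n)ˣ) :
    Function.Injective fun x : G ↦ x ^ (a : ZMod n).val := by
  refine Function.LeftInverse.injective (g := fun x : G ↦ x ^ (↑a⁻¹ : ZMod n).val) fun x ↦ ?_
  dsimp only
  rw [← pow_mul]
  conv_rhs => rw [← pow_one x]
  refine pow_eq_pow_of_modEq ?_ (Monoid.exponent_dvd_iff_forall_pow_eq_one.mp hn x)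
  rw [← ZMod.natCast_eq_natCast_iff]
  push_cast [ZMod.natCast_val, ZMod.cast_id', id]
  exact a.mul_inv

theorem Finset.sum_comp_of_injective_of_mapsTo {α M : Type*} [AddCommMonoid M] {s : Finset α}
    {e : α → α} (he : Function.Injective e) (hs : Set.MapsTo e s s) (f : α → M) :
    ∑ x ∈ s, f (e x) = ∑ x ∈ s, f x :=
  Finset.sum_nbij e hs he.injOn (Finset.surjOn_of_injOn_of_card_le e hs he.injOn le_rfl)
    fun _ _ ↦ rfl

theorem gammaK_autToPow_val {ζ : ℂ} {n : ℕ} [NeZero n]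
    (hζ : IsPrimitiveRoot (AdjoinSimple.gen ℚ ζ) n) {K : IntermediateField ℚ ℂ} (hK : K ≤ ℚ⟮ζ⟯)
    {σ : ℚ⟮ζ⟯ ≃ₐ[ℚ] ℚ⟮ζ⟯} (hσ : σ ∈ (restrict hK).fixingSubgroup) :
    GammaK ζ K (hζ.autToPow ℚ σ : ZMod n).val := by
  refine ⟨σ, fun x hx hxK ↦ ?_, ?_⟩
  · exact congrArg Subtype.val (hσ ⟨⟨x, hx⟩, (mem_restrict hK _).2 hxK⟩)
  · change (σ (AdjoinSimple.gen ℚ ζ) : ℂ) = _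
    rw [← hζ.autToPow_spec ℚ σ]
    rfl

theorem coe_algEquiv_aeval_gen {ζ : ℂ} {n : ℕ} [NeZero n]
    (hζ : IsPrimitiveRoot (AdjoinSimple.gen ℚ ζ) n) (σ : ℚ⟮ζ⟯ ≃ₐ[ℚ] ℚ⟮ζ⟯) (p : ℕ[X]) :
    ((σ (aeval (AdjoinSimple.gen ℚ ζ) p) : ℚ⟮ζ⟯) : ℂ) =
      aeval (ζ ^ (hζ.autToPow ℚ σ : ZMod n).val) p := by
  rw [map_aeval_nat σ, ← hζ.autToPow_spec ℚ σ]
  exact map_aeval_nat (ℚ⟮ζ⟯).val _ p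

theorem stmt14_general {G : Type} [Group G] [Fintype G] (C : Finset G)
    (ζ : ℂ) (hζ : IsPrimitiveRoot ζ (Monoid.exponent G))
    (K : IntermediateField ℚ ℂ) (hK : K ≤ ℚ⟮ζ⟯)
    (hCK : ∀ g ∈ C, ∀ h : G, GammaConj ζ K h g → h ∈ C)
    (V : FDRep ℂ G) :
    (∑ x ∈ C, V.character x) / V.character 1 ∈ K := by
  have : NeZero (Monoid.exponent G) := ⟨Monoid.exponent_ne_zero_of_finite⟩
  -- not ascribed `IsGalois ℚ ℚ⟮ζ⟯`, which would pick `DivisionRing.toRatAlgebra` instead of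
  -- the algebra structure of intermediate fields that `restrict hK` refers to
  have := hζ.isGalois_adjoin_simple ℚ
  have := adjoin.finiteDimensional ((hζ.isIntegral (NeZero.pos _)).tower_top (A := ℚ))
  have hz : IsPrimitiveRoot (AdjoinSimple.gen ℚ ζ) (Monoid.exponent G) :=
    hζ.of_map_of_injective (f := (ℚ⟮ζ⟯).val) Subtype.val_injective
  choose P hP using V.exists_character_pow_eq_aeval hζ
  let S : ℚ⟮ζ⟯ := ∑ x ∈ C, aeval (AdjoinSimple.gen ℚ ζ) (P x)
  have hS : (S : ℂ) = ∑ x ∈ C, V.character x := by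
    rw [AddSubmonoidClass.coe_finsetSum]
    refine Finset.sum_congr rfl fun x _ ↦ (map_aeval_nat (ℚ⟮ζ⟯).val _ (P x)).trans ?_
    simpa using (hP x 1).symm
  suffices S ∈ restrict hK by
    rw [FDRep.char_one, ← hS]
    exact div_mem ((mem_restrict hK S).1 this) (IntermediateField.natCast_mem K _)
  rw [← IsGalois.fixedField_fixingSubgroup (restrict hK)]
  rintro ⟨σ, hσ⟩
  set a := hz.autToPow ℚ σ
  have hpow_mem : Set.MapsTo (fun x : G ↦ x ^ (a : ZMod (Monoid.exponent G)).val) C C :=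
    fun x hx ↦ hCK x hx _ ⟨_, gammaK_autToPow_val hz hK hσ, IsConj.refl _⟩
  apply Subtype.ext
  calc ((σ S : ℚ⟮ζ⟯) : ℂ) = ∑ x ∈ C, V.character (x ^ (a : ZMod (Monoid.exponent G)).val) := by
        rw [map_sum, AddSubmonoidClass.coe_finsetSum]
        exact Finset.sum_congr rfl fun x _ ↦
          (coe_algEquiv_aeval_gen hz σ (P x)).trans (hP x _).symm
    _ = (S : ℂ) := by
        rw [hS, Finset.sum_comp_of_injective_of_mapsTo
          (Monoid.pow_val_injective dvd_rfl a) hpow_mem]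

/-- If `C` is a union of `Γ_K`-conjugacy classes, then for every irreducible character `χ`
the eigenvalue `(1/χ(1)) ∑_{x ∈ C} χ(x)` of `Cay(G, C)` lies in `K`. -/
theorem stmt14 {G : Type} [Group G] [Fintype G] (C : Finset G)
    (hC : ∀ g ∈ C, ∀ h : G, h * g * h⁻¹ ∈ C)
    (ζ : ℂ) (hζ : IsPrimitiveRoot ζ (Monoid.exponent G))
    (K : IntermediateField ℚ ℂ) (hK : K ≤ ℚ⟮ζ⟯)
    (hCK : ∀ g ∈ C, ∀ h : G, GammaConj ζ K h g → h ∈ C)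
    (V : FDRep ℂ G) (hV : CategoryTheory.Simple V) :
    (∑ x ∈ C, V.character x) / V.character 1 ∈ K :=
  stmt14_general C ζ hζ K hK hCK V
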